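/- Let U ⊆ ℝ² ≅ ℂ be a connected open set containing 0, and let ψ : U → ℝ be harmonic on U, not identically zero, with ψ(0) = 0. Then there exist an integer m ≥ 1 and a complex number c ≠ 0 such that ψ(z) − Im(c zᵐ) = O(|z|^{m+1}) as z → 0; here m is the smallest order of a nonvanishing partial derivative of ψ at 0. -/

import Mathlib

noncomputable section

open Real Set Filter Topology Asymptotics

/-- The Laplacian of a function on `ℂ ≅ ℝ²`, via the real directions `1` and `I`. -/
def lapC (ψ : ℂ → ℝ) (z : ℂ) : ℝ :=
  fderiv ℝ (fun w => fderiv ℝ ψ w 1) z 1 +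
  fderiv ℝ (fun w => fderiv ℝ ψ w Complex.I) z Complex.I

/-- `ψ` is harmonic on `U ⊆ ℂ`. -/
def HarmOnC (ψ : ℂ → ℝ) (U : Set ℂ) : Prop :=
  ContDiffOn ℝ 2 ψ U ∧ ∀ z ∈ U, lapC ψ z = 0

namespace Stmt7Aux
open Complex ContinuousLinearMap

def gC (ψ : ℂ → ℝ) (z : ℂ) : ℂ :=
  ((fderiv ℝ ψ z 1 : ℝ) : ℂ) - (fderiv ℝ ψ z Complex.I : ℝ) • Complex.I

lemma fderiv_eq_gC (ψ : ℂ → ℝ) (z : ℂ) (w : ℂ) :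
    fderiv ℝ ψ z w = (gC ψ z * w).re := by
  have hw : w = w.re • (1:ℂ) + w.im • Complex.I := by
    simp [Complex.real_smul, Complex.re_add_im]
  conv_lhs => rw [hw]
  rw [map_add, map_smul, map_smul]
  simp [gC, Complex.mul_re, Complex.smul_re, Complex.smul_im]
  ring

lemma hasDerivAt_gC {ψ : ℂ → ℝ} {z : ℂ} (hψ : ContDiffAt ℝ 2 ψ z) (hlap : lapC ψ z = 0) :
    HasDerivAt (gC ψ)
      (((fderiv ℝ (fderiv ℝ ψ) z 1 1 : ℝ) : ℂ)
        - (fderiv ℝ (fderiv ℝ ψ) z 1 Complex.I : ℝ) • Complex.I) z := by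
  have h1 : ContDiffAt ℝ 1 (fderiv ℝ ψ) z := hψ.fderiv_right (by norm_num)
  have hd2 : DifferentiableAt ℝ (fderiv ℝ ψ) z := h1.differentiableAt (by norm_num)
  set D2 := fderiv ℝ (fderiv ℝ ψ) z with hD2def
  have hD2 : HasFDerivAt (fderiv ℝ ψ) D2 z := hd2.hasFDerivAt
  have hsym : IsSymmSndFDerivAt ℝ ψ z := hψ.isSymmSndFDerivAt (by simp)
  have hu : HasFDerivAt (fun w => fderiv ℝ ψ w 1)
      ((ContinuousLinearMap.apply ℝ ℝ (1:ℂ)).comp D2) z :=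
    (ContinuousLinearMap.apply ℝ ℝ (1:ℂ)).hasFDerivAt.comp z hD2
  have hv : HasFDerivAt (fun w => fderiv ℝ ψ w Complex.I)
      ((ContinuousLinearMap.apply ℝ ℝ (Complex.I)).comp D2) z :=
    (ContinuousLinearMap.apply ℝ ℝ (Complex.I)).hasFDerivAt.comp z hD2
  have hlap' : D2 1 1 + D2 Complex.I Complex.I = 0 := by
    rw [lapC, hu.fderiv, hv.fderiv] at hlap
    simpa using hlap
  have hu' : HasFDerivAt (fun w => ((fderiv ℝ ψ w 1 : ℝ) : ℂ))
      (Complex.ofRealCLM.comp ((ContinuousLinearMap.apply ℝ ℝ (1:ℂ)).comp D2)) z :=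
    Complex.ofRealCLM.hasFDerivAt.comp z hu
  have hv' : HasFDerivAt (fun w => (fderiv ℝ ψ w Complex.I : ℝ) • Complex.I)
      (((1 : ℝ →L[ℝ] ℝ).smulRight Complex.I).comp
        ((ContinuousLinearMap.apply ℝ ℝ (Complex.I)).comp D2)) z :=
    ((1 : ℝ →L[ℝ] ℝ).smulRight Complex.I).hasFDerivAt.comp z hv
  have hg : HasFDerivAt (gC ψ)
      (Complex.ofRealCLM.comp ((ContinuousLinearMap.apply ℝ ℝ (1:ℂ)).comp D2)
        - ((1 : ℝ →L[ℝ] ℝ).smulRight Complex.I).comp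
            ((ContinuousLinearMap.apply ℝ ℝ (Complex.I)).comp D2)) z := hu'.sub hv'
  rw [hasDerivAt_iff_hasFDerivAt]
  apply hasFDerivAt_of_restrictScalars ℝ hg
  ext w
  have hw : w = w.re • (1:ℂ) + w.im • Complex.I := by
    simp [Complex.real_smul, Complex.re_add_im]
  have e1 : D2 w 1 = w.re * D2 1 1 + w.im * D2 Complex.I 1 := by
    calc D2 w 1 = D2 (w.re • (1:ℂ) + w.im • Complex.I) 1 := by rw [← hw]
    _ = w.re * D2 1 1 + w.im * D2 Complex.I 1 := by
        rw [map_add, map_smul, map_smul]; rfl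
  have e2 : D2 w Complex.I = w.re * D2 1 Complex.I + w.im * D2 Complex.I Complex.I := by
    calc D2 w Complex.I = D2 (w.re • (1:ℂ) + w.im • Complex.I) Complex.I := by rw [← hw]
    _ = w.re * D2 1 Complex.I + w.im * D2 Complex.I Complex.I := by
        rw [map_add, map_smul, map_smul]; rfl
  have hs1 : D2 Complex.I 1 = D2 1 Complex.I := hsym Complex.I 1
  have hl1 : D2 Complex.I Complex.I = -(D2 1 1) := by linarith
  rw [hs1] at e1
  rw [hl1] at e2
  simp only [ContinuousLinearMap.coe_restrictScalars', ContinuousLinearMap.comp_apply,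
    ContinuousLinearMap.smulRight_apply, ContinuousLinearMap.one_apply,
    ContinuousLinearMap.apply_apply, Complex.ofRealCLM_apply, e1, e2]
  apply Complex.ext <;>
    simp [e1, e2, Complex.mul_re, Complex.mul_im, Complex.smul_re, Complex.smul_im,
      Complex.add_re, Complex.add_im] <;> ring

lemma eventuallyEq_iteratedFDeriv_eq {𝕜 : Type*} [NontriviallyNormedField 𝕜]
    {E F : Type*} [NormedAddCommGroup E] [NormedSpace 𝕜 E] [NormedAddCommGroup F]
    [NormedSpace 𝕜 F] {f₁ f : E → F} {x : E} (h : f₁ =ᶠ[𝓝 x] f) (n : ℕ) :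
    iteratedFDeriv 𝕜 n f₁ x = iteratedFDeriv 𝕜 n f x := by
  rw [← iteratedFDerivWithin_univ, ← iteratedFDerivWithin_univ]
  exact Filter.EventuallyEq.iteratedFDerivWithin_eq
    (by simpa [nhdsWithin_univ] using h) h.eq_of_nhds n

lemma comp_left_ball {W : Type*} [NormedAddCommGroup W] [NormedSpace ℝ W]
    {f : ℂ → ℂ} {r : ℝ} (hr : 0 < r)
    (hf : ∀ z ∈ Metric.ball (0:ℂ) r, AnalyticAt ℂ f z)
    (A : ℂ →L[ℝ] W) (i : ℕ) :
    iteratedFDeriv ℝ i (fun z => A (f z)) 0 =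
      A.compContinuousMultilinearMap (iteratedFDeriv ℝ i f 0) := by
  have hs : IsOpen (Metric.ball (0:ℂ) r) := Metric.isOpen_ball
  have h0 : (0:ℂ) ∈ Metric.ball (0:ℂ) r := by simpa using hr
  have hcd : ContDiffOn ℝ i f (Metric.ball (0:ℂ) r) :=
    AnalyticOnNhd.contDiffOn_of_completeSpace (fun z hz => (hf z hz).restrictScalars)
  rw [← iteratedFDerivWithin_of_isOpen i hs h0, ← iteratedFDerivWithin_of_isOpen i hs h0,
    show (fun z => A (f z)) = A ∘ f from rfl,
    A.iteratedFDerivWithin_comp_left (hcd _ h0) hs.uniqueDiffOn h0 le_rfl]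

lemma holo_iter_vanish :
    ∀ (j : ℕ) (g : ℂ → ℂ) (r : ℝ), 0 < r →
      DifferentiableOn ℂ g (Metric.ball (0:ℂ) r) →
      (∀ i ≤ j, iteratedDeriv i g 0 = 0) →
      ∀ i ≤ j, iteratedFDeriv ℝ i g 0 = 0 := by
  intro j
  induction j with
  | zero =>
    intro g r hr hg hv i hi
    obtain rfl : i = 0 := Nat.le_zero.mp hi
    ext m
    simpa [iteratedFDeriv_zero_apply] using (by simpa [iteratedDeriv_zero] using hv 0 le_rfl : g 0 = 0)
  | succ j IH =>
    intro g r hr hg hv i hi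
    have hs : IsOpen (Metric.ball (0:ℂ) r) := Metric.isOpen_ball
    have h0 : (0:ℂ) ∈ Metric.ball (0:ℂ) r := by simpa using hr
    have han : AnalyticOnNhd ℂ g (Metric.ball (0:ℂ) r) := hg.analyticOnNhd hs
    match i with
    | 0 =>
      ext m
      simpa [iteratedFDeriv_zero_apply] using
        (by simpa [iteratedDeriv_zero] using hv 0 (by omega) : g 0 = 0)
    | (i'+1) =>
      have hderiv_an : AnalyticOnNhd ℂ (deriv g) (Metric.ball (0:ℂ) r) := han.deriv
      have IH' : ∀ k ≤ j, iteratedFDeriv ℝ k (deriv g) 0 = 0 :=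
        IH (deriv g) r hr hderiv_an.differentiableOn
          (fun k hk => by rw [← iteratedDeriv_succ']; exact hv (k+1) (by omega))
      have hcongr : (fun z => fderiv ℝ g z) =ᶠ[𝓝 (0:ℂ)]
          (fun z => (ContinuousLinearMap.mul ℝ ℂ) (deriv g z)) := by
        filter_upwards [hs.mem_nhds h0] with z hz
        have hd : DifferentiableAt ℂ g z := (han z hz).differentiableAt
        rw [(hd.hasDerivAt.hasFDerivAt.restrictScalars ℝ).fderiv]
        ext w
        simp [mul_comm]
      have heq : iteratedFDeriv ℝ i' (fderiv ℝ g) 0 =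
          iteratedFDeriv ℝ i' (fun z => (ContinuousLinearMap.mul ℝ ℂ) (deriv g z)) 0 :=
        eventuallyEq_iteratedFDeriv_eq hcongr i'
      have hcomp := comp_left_ball hr (fun z hz => hderiv_an z hz)
        (ContinuousLinearMap.mul ℝ ℂ) i'
      ext m
      rw [iteratedFDeriv_succ_apply_right, heq, hcomp, IH' i' (by omega)]
      simp

end Stmt7Aux

/-- The lowest-order homogeneous Taylor term at a zero of a nonzero harmonic function is a
nonzero multiple of `Im (c zᵐ)`: `ψ(z) - Im (c zᵐ) = O(|z|^(m+1))` as `z → 0`, where `m ≥ 1`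
is the smallest order of a nonvanishing derivative of `ψ` at `0`. -/
theorem stmt_7 (U : Set ℂ) (hU : IsOpen U) (hUconn : IsConnected U) (h0 : (0 : ℂ) ∈ U)
    (ψ : ℂ → ℝ) (hharm : HarmOnC ψ U) (hnz : ∃ z ∈ U, ψ z ≠ 0) (hψ0 : ψ 0 = 0) :
    ∃ m : ℕ, 1 ≤ m ∧ ∃ c : ℂ, c ≠ 0 ∧
      (fun z : ℂ => ψ z - (c * z ^ m).im) =O[𝓝 (0 : ℂ)] (fun z : ℂ => ‖z‖ ^ (m + 1)) ∧
      (∀ k < m, iteratedFDeriv ℝ k ψ 0 = 0) ∧ iteratedFDeriv ℝ m ψ 0 ≠ 0 := by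
  obtain ⟨hsm, hlap⟩ := hharm
  have hψCA : ∀ z ∈ U, ContDiffAt ℝ 2 ψ z := fun z hz => hsm.contDiffAt (hU.mem_nhds hz)
  have hψd : ∀ z ∈ U, DifferentiableAt ℝ ψ z := fun z hz =>
    (hψCA z hz).differentiableAt (by norm_num)
  set g := Stmt7Aux.gC ψ with hgdef
  have hgd : ∀ z ∈ U, DifferentiableAt ℂ g z := fun z hz =>
    (Stmt7Aux.hasDerivAt_gC (hψCA z hz) (hlap z hz)).differentiableAt
  have hgan : AnalyticOnNhd ℂ g U :=
    DifferentiableOn.analyticOnNhd (fun z hz => (hgd z hz).differentiableWithinAt) hU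
  -- choose radii
  obtain ⟨ρ, hρ, hballU⟩ := Metric.isOpen_iff.mp hU 0 h0
  obtain ⟨p, rp, hpb⟩ := hgan 0 h0
  obtain ⟨rr, hrr0, hrrlt⟩ := ENNReal.lt_iff_exists_nnreal_btwn.mp hpb.r_pos
  have hrr0' : (0:ℝ) < (rr : ℝ) := by exact_mod_cast hrr0
  set r : ℝ := min (rr : ℝ) ρ with hrdef
  have hr0 : 0 < r := lt_min hrr0' hρ
  set s := Metric.ball (0:ℂ) r with hsdef
  have hs_open : IsOpen s := Metric.isOpen_ball
  have h0s : (0:ℂ) ∈ s := Metric.mem_ball_self hr0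
  have hsU : s ⊆ U := fun z hz =>
    hballU (Metric.mem_ball.mpr (lt_of_lt_of_le (Metric.mem_ball.mp hz) (min_le_right _ _)))
  have hs_sub : ∀ z ∈ s, z ∈ Metric.eball (0:ℂ) rp := by
    intro z hz
    rw [mem_emetric_ball_zero_iff]
    refine lt_of_lt_of_le ?_ hrrlt.le
    rw [← ofReal_norm_eq_enorm, ← ENNReal.ofReal_coe_nnreal, ENNReal.ofReal_lt_ofReal_iff hrr0']
    exact lt_of_lt_of_le (mem_ball_zero_iff.mp hz) (min_le_left _ _)
  have hsum : Summable (fun n => ‖p n‖ * (rr:ℝ)^n) :=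
    p.summable_norm_mul_pow (lt_of_lt_of_le hrrlt hpb.r_le)
  -- the primitive
  set F : ℂ → ℂ := fun z => ∑' n : ℕ, ((n:ℂ)+1)⁻¹ * p.coeff n * z^(n+1) with hFdef
  have hcoeff_le : ∀ n, ‖p.coeff n‖ ≤ ‖p n‖ := by
    intro n
    calc ‖p.coeff n‖ = ‖p n (fun _ => 1)‖ := rfl
    _ ≤ ‖p n‖ * ∏ _i : Fin n, ‖(1:ℂ)‖ := (p n).le_opNorm _
    _ = ‖p n‖ := by simp
  have hFderiv : ∀ z ∈ s, HasDerivAt F (g z) z := by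
    intro z hz
    have hterm : ∀ (n : ℕ) (y : ℂ), y ∈ s →
        HasDerivAt (fun w => ((n:ℂ)+1)⁻¹ * p.coeff n * w^(n+1)) (p.coeff n * y^n) y := by
      intro n y _
      have h := (hasDerivAt_pow (n+1) y).const_mul (((n:ℂ)+1)⁻¹ * p.coeff n)
      refine h.congr_deriv ?_
      have hne : ((n:ℂ)+1) ≠ 0 := Nat.cast_add_one_ne_zero n
      push_cast
      field_simp
    have hbound : ∀ (n : ℕ) (y : ℂ), y ∈ s → ‖p.coeff n * y^n‖ ≤ ‖p n‖ * (rr:ℝ)^n := by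
      intro n y hy
      rw [norm_mul, norm_pow]
      have h1 : ‖y‖ ≤ (rr:ℝ) := le_of_lt (lt_of_lt_of_le (mem_ball_zero_iff.mp hy) (min_le_left _ _))
      exact mul_le_mul (hcoeff_le n) (pow_le_pow_left₀ (norm_nonneg y) h1 n)
        (pow_nonneg (norm_nonneg y) n) (norm_nonneg _)
    have hsum0 : Summable (fun n : ℕ => ((n:ℂ)+1)⁻¹ * p.coeff n * (0:ℂ)^(n+1)) := by
      apply summable_of_ne_finset_zero (s := ∅)
      intro n _
      simp
    have H := hasDerivAt_tsum_of_isPreconnected hsum hs_open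
      (convex_ball (0:ℂ) r).isPreconnected hterm hbound h0s hsum0 hz
    have hgsum : HasSum (fun n => p.coeff n * z^n) (g z) := by
      have h2 := hpb.hasSum (hs_sub z hz)
      simp only [FormalMultilinearSeries.apply_eq_pow_smul_coeff, smul_eq_mul, zero_add] at h2
      simpa [mul_comm] using h2
    refine H.congr_deriv ?_
    exact hgsum.tsum_eq
  have hF0 : F 0 = 0 := by
    have : ∀ n : ℕ, ((n:ℂ)+1)⁻¹ * p.coeff n * (0:ℂ)^(n+1) = 0 := fun n => by simp
    calc F 0 = ∑' (_ : ℕ), (0:ℂ) := tsum_congr (fun n => this n)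
    _ = 0 := tsum_zero
  -- ψ = Re F on s
  have hψF : ∀ z ∈ s, ψ z = (F z).re := by
    have hdiff : DifferentiableOn ℝ (fun z => ψ z - (F z).re) s := by
      intro z hz
      exact ((hψd z (hsU hz)).sub
        ((Complex.reCLM.differentiableAt).comp z
          ((hFderiv z hz).differentiableAt.restrictScalars ℝ))).differentiableWithinAt
    have hzero : ∀ z ∈ s, fderivWithin ℝ (fun z => ψ z - (F z).re) s z = 0 := by
      intro z hz
      rw [fderivWithin_of_isOpen hs_open hz]
      have h1 : HasFDerivAt (fun z => ψ z - (F z).re)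
          (fderiv ℝ ψ z - Complex.reCLM.comp
            (((1 : ℂ →L[ℂ] ℂ).smulRight (g z)).restrictScalars ℝ)) z :=
        (hψd z (hsU hz)).hasFDerivAt.sub
          (Complex.reCLM.hasFDerivAt.comp z ((hFderiv z hz).hasFDerivAt.restrictScalars ℝ))
      rw [h1.fderiv]
      ext w
      simp [Stmt7Aux.fderiv_eq_gC ψ z w, mul_comm, Complex.smul_re, hgdef]
    intro z hz
    have := Convex.is_const_of_fderivWithin_eq_zero (convex_ball (0:ℂ) r) hdiff hzero hz h0s
    simp only [hψ0, hF0, Complex.zero_re, sub_zero, sub_self] at this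
    linarith [this]
  have hψeq : (fun z => (F z).re) =ᶠ[𝓝 (0:ℂ)] ψ := by
    filter_upwards [hs_open.mem_nhds h0s] with z hz
    exact (hψF z hz).symm
  -- power series of F
  have hFanal : AnalyticAt ℂ F 0 :=
    DifferentiableOn.analyticAt (fun z hz => (hFderiv z hz).differentiableAt.differentiableWithinAt)
      (hs_open.mem_nhds h0s)
  obtain ⟨q, hq⟩ := hFanal
  -- nontriviality
  have hqne : q ≠ 0 := by
    intro hq0
    have hF0' : ∀ᶠ z in 𝓝 (0:ℂ), F z = 0 := hq.locally_zero_iff.mpr hq0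
    have hg0 : g =ᶠ[𝓝 (0:ℂ)] 0 := by
      have hF0'' : F =ᶠ[𝓝 (0:ℂ)] (fun _ => (0:ℂ)) := hF0'
      have hdF : deriv F =ᶠ[𝓝 (0:ℂ)] deriv (fun _ => (0:ℂ)) := hF0''.deriv
      have hgF : g =ᶠ[𝓝 (0:ℂ)] deriv F := by
        filter_upwards [hs_open.mem_nhds h0s] with z hz
        exact ((hFderiv z hz).deriv).symm
      refine hgF.trans (hdF.trans ?_)
      simp [deriv_const']
      rfl
    have hgz : EqOn g 0 U :=
      hgan.eqOn_zero_of_preconnected_of_eventuallyEq_zero hUconn.isPreconnected h0 hg0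
    -- ψ locally constant on U
    have hloc : ∀ z ∈ U, ∃ ε > 0, Metric.ball z ε ⊆ U ∧ ∀ w ∈ Metric.ball z ε, ψ w = ψ z := by
      intro z hz
      obtain ⟨ε, hε, hball⟩ := Metric.isOpen_iff.mp hU z hz
      refine ⟨ε, hε, hball, ?_⟩
      intro w hw
      have hdiff : DifferentiableOn ℝ ψ (Metric.ball z ε) :=
        fun y hy => (hψd y (hball hy)).differentiableWithinAt
      have hzero : ∀ y ∈ Metric.ball z ε, fderivWithin ℝ ψ (Metric.ball z ε) y = 0 := by
        intro y hy
        rw [fderivWithin_of_isOpen Metric.isOpen_ball hy]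
        ext v
        rw [Stmt7Aux.fderiv_eq_gC ψ y v]
        have hgy : Stmt7Aux.gC ψ y = 0 := by rw [← hgdef]; exact hgz (hball hy)
        simp [hgy]
      exact Convex.is_const_of_fderivWithin_eq_zero (convex_ball z ε) hdiff hzero hw
        (Metric.mem_ball_self hε)
    obtain ⟨z₀, hz₀U, hz₀⟩ := hnz
    set V := {z | z ∈ U ∧ ψ z = 0} with hVdef
    set W := {z | z ∈ U ∧ ψ z ≠ 0} with hWdef
    have hVopen : IsOpen V := by
      rw [Metric.isOpen_iff]
      rintro z ⟨hzU, hzψ⟩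
      obtain ⟨ε, hε, hball, hconst⟩ := hloc z hzU
      exact ⟨ε, hε, fun w hw => ⟨hball hw, by rw [hconst w hw, hzψ]⟩⟩
    have hWopen : IsOpen W := by
      rw [Metric.isOpen_iff]
      rintro z ⟨hzU, hzψ⟩
      obtain ⟨ε, hε, hball, hconst⟩ := hloc z hzU
      exact ⟨ε, hε, fun w hw => ⟨hball hw, by rw [hconst w hw]; exact hzψ⟩⟩
    have hdisj : Disjoint V W := by
      rw [Set.disjoint_iff]
      rintro z ⟨⟨_, h1⟩, ⟨_, h2⟩⟩
      exact h2 h1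
    have hsub : U ⊆ V ∪ W := by
      intro z hz
      by_cases h : ψ z = 0
      · exact Or.inl ⟨hz, h⟩
      · exact Or.inr ⟨hz, h⟩
    have hUV : U ⊆ V :=
      hUconn.isPreconnected.subset_left_of_subset_union hVopen hWopen hdisj hsub
        ⟨0, h0, h0, hψ0⟩
    exact hz₀ (hUV hz₀U).2
  -- the order
  have hq0c : q 0 = 0 := by
    refine ContinuousMultilinearMap.ext fun v => ?_
    rw [hq.coeff_zero v, hF0]
    rfl
  set m := q.order with hmdef
  have hm1 : 1 ≤ m := by
    by_contra h
    have hm0 : m = 0 := by omega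
    have := q.apply_order_ne_zero hqne
    rw [← hmdef, hm0, hq0c] at this
    exact this rfl
  set a := q.coeff m with hadef
  have ha : a ≠ 0 := by
    intro h
    apply q.apply_order_ne_zero hqne
    rw [← hmdef]
    ext v
    rw [FormalMultilinearSeries.apply_eq_prod_smul_coeff, ← hadef, h, smul_zero]
    rfl
  refine ⟨m, hm1, Complex.I * a, by simp [ha, Complex.I_ne_zero], ?_, ?_, ?_⟩
  · -- big-O
    have hO1 := hq.isBigO_sub_partialSum_pow (m+1)
    have hps : ∀ z : ℂ, q.partialSum (m+1) z = z^m • a := by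
      intro z
      rw [FormalMultilinearSeries.partialSum,
        Finset.sum_eq_single_of_mem m (Finset.self_mem_range_succ m)]
      · rw [FormalMultilinearSeries.apply_eq_pow_smul_coeff]
      · intro b hb hbm
        have hblt : b < m := by
          have := Finset.mem_range.mp hb
          omega
        rw [FormalMultilinearSeries.apply_eq_zero_of_lt_order hblt]
        rfl
    have hEq : (fun z => ψ z - (Complex.I*a*z^m).im) =ᶠ[𝓝 (0:ℂ)]
        (fun z => (F (0+z) - q.partialSum (m+1) z).re) := by
      filter_upwards [hs_open.mem_nhds h0s] with z hz
      rw [zero_add, hψF z hz, hps z, Complex.sub_re]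
      have : (Complex.I*a*z^m).im = (z^m • a).re := by
        simp [Complex.mul_im, Complex.mul_re, Complex.smul_re, smul_eq_mul]
        ring
      rw [this]
    refine hEq.trans_isBigO ?_
    refine IsBigO.trans ?_ hO1
    apply isBigO_of_le
    intro z
    have := Complex.abs_re_le_norm (F (0+z) - q.partialSum (m+1) z)
    simpa [Complex.sub_re] using this
  · -- vanishing of lower derivatives
    obtain ⟨rq, hqb⟩ := hq
    have hFiterC : ∀ i, i < m → iteratedDeriv i F 0 = 0 := by
      intro i him
      have h1 := hqb.factorial_smul (1:ℂ) i
      have h2 : q i = 0 := FormalMultilinearSeries.apply_eq_zero_of_lt_order him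
      rw [iteratedDeriv_eq_iteratedFDeriv, ← h1, h2]
      simp
    have hgF : deriv F =ᶠ[𝓝 (0:ℂ)] g := by
      filter_upwards [hs_open.mem_nhds h0s] with z hz
      exact (hFderiv z hz).deriv
    have hgiterC : ∀ i, i + 1 < m → iteratedDeriv i g 0 = 0 := by
      intro i him
      have heq : iteratedFDeriv ℂ i g 0 = iteratedFDeriv ℂ i (deriv F) 0 :=
        Stmt7Aux.eventuallyEq_iteratedFDeriv_eq hgF.symm i
      rw [iteratedDeriv_eq_iteratedFDeriv, heq, ← iteratedDeriv_eq_iteratedFDeriv,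
        ← iteratedDeriv_succ']
      exact hFiterC (i+1) him
    intro k hk
    match k, hk with
    | 0, _ =>
      ext v
      simpa [iteratedFDeriv_zero_apply] using hψ0
    | (k'+1), hk =>
      have hgvan : ∀ i ≤ k', iteratedFDeriv ℝ i g 0 = 0 :=
        Stmt7Aux.holo_iter_vanish k' g r hr0
          (fun z hz => (hgd z (hsU hz)).differentiableWithinAt)
          (fun i hi => hgiterC i (by omega))
      set LL : ℂ →L[ℝ] (ℂ →L[ℝ] ℝ) :=
        (ContinuousLinearMap.compL ℝ ℂ ℂ ℝ Complex.reCLM).comp (ContinuousLinearMap.mul ℝ ℂ)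
        with hLLdef
      have hfd_eq : fderiv ℝ ψ = (fun z => LL (g z)) := by
        funext z
        ext w
        rw [Stmt7Aux.fderiv_eq_gC ψ z w]
        simp [hLLdef, hgdef]
      have heq : iteratedFDeriv ℝ k' (fderiv ℝ ψ) 0 =
          iteratedFDeriv ℝ k' (fun z => LL (g z)) 0 := by rw [hfd_eq]
      have hcomp := Stmt7Aux.comp_left_ball hr0 (fun z hz => hgan z (hsU hz)) LL k'
      ext v
      rw [iteratedFDeriv_succ_apply_right, heq, hcomp, hgvan k' le_rfl]
      simp
  · -- nonvanishing of the m-th derivative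
    obtain ⟨rq, hqb⟩ := hq
    have hP : HasFPowerSeriesAt (fun z => (F z).re)
        (Complex.reCLM.compFormalMultilinearSeries (q.restrictScalars ℝ)) 0 :=
      ⟨rq, Complex.reCLM.comp_hasFPowerSeriesOnBall hqb.restrictScalars⟩
    have hPψ : HasFPowerSeriesAt ψ
        (Complex.reCLM.compFormalMultilinearSeries (q.restrictScalars ℝ)) 0 := hP.congr hψeq
    obtain ⟨rP, hPb⟩ := hPψ
    set w₀ : ℂ := (a⁻¹) ^ ((m:ℂ))⁻¹ with hw₀def
    have hw : w₀ ^ m = a⁻¹ := Complex.cpow_nat_inv_pow _ (by omega)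
    intro hcontra
    have h2 := hPb.factorial_smul w₀ m
    rw [hcontra] at h2
    have h3 : ((Complex.reCLM.compFormalMultilinearSeries (q.restrictScalars ℝ)) m
        fun _ => w₀) = 1 := by
      simp only [ContinuousLinearMap.compFormalMultilinearSeries_apply,
        ContinuousLinearMap.compContinuousMultilinearMap_coe, Function.comp_apply]
      have : ((q.restrictScalars ℝ) m fun _ => w₀) = (q m fun _ => w₀) := rfl
      rw [this, FormalMultilinearSeries.apply_eq_pow_smul_coeff, hw, ← hadef]
      simp [inv_mul_cancel₀ ha]
    rw [h3] at h2
    simp [Nat.factorial_ne_zero] at h2
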